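/- arXiv:1303.4268 — 2 statements merged into one kernel-verified Lean document; each statement's English description precedes it below -/
import Mathlib

section
/- Let h : (0,∞) → (0,∞) be continuous with lim_{τ→0+} h(τ) = 0 and lim_{τ→0+} √τ/h(τ) = 0. Then for every real u, the quantity h(τ)·G_τ(u/h(τ)) is well defined for all sufficiently small τ > 0, and lim_{τ→0+} h(τ)·G_τ(u/h(τ)) = 0. -/
open Filter Topology Asymptotics MeasureTheory

set_option linter.unusedVariables false

noncomputable section


/-- sign convention of the paper: 1 if `0 ≤ x`, -1 otherwise. -/
def sgn' (x : ℝ) : ℝ := if 0 ≤ x then 1 else -1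

/-- principal-branch complex square root `d` of the Heston Riccati discriminant. -/
def hestD (κ ρ ξ : ℝ) (w : ℂ) : ℂ :=
  (((κ : ℂ) - (ρ : ℂ) * (ξ : ℂ) * w) ^ 2 + w * (1 - w) * (ξ : ℂ) ^ 2) ^ ((1 : ℂ) / 2)

def hestGamma (κ ρ ξ : ℝ) (w : ℂ) : ℂ :=
  ((κ : ℂ) - (ρ : ℂ) * (ξ : ℂ) * w - hestD κ ρ ξ w) /
    ((κ : ℂ) - (ρ : ℂ) * (ξ : ℂ) * w + hestD κ ρ ξ w)

def hestB (κ ρ ξ : ℝ) (w : ℂ) (τ : ℝ) : ℂ :=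
  (((κ : ℂ) - (ρ : ℂ) * (ξ : ℂ) * w - hestD κ ρ ξ w) / (ξ : ℂ) ^ 2) *
    ((1 - Complex.exp (-(hestD κ ρ ξ w) * (τ : ℂ))) /
      (1 - hestGamma κ ρ ξ w * Complex.exp (-(hestD κ ρ ξ w) * (τ : ℂ))))

def hestA (κ θ ρ ξ : ℝ) (w : ℂ) (τ : ℝ) : ℂ :=
  ((κ * θ / ξ ^ 2 : ℝ) : ℂ) *
    (((κ : ℂ) - (ρ : ℂ) * (ξ : ℂ) * w - hestD κ ρ ξ w) * (τ : ℂ) -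
      2 * Complex.log ((1 - hestGamma κ ρ ξ w * Complex.exp (-(hestD κ ρ ξ w) * (τ : ℂ))) /
        (1 - hestGamma κ ρ ξ w)))

def betaT (κ ξ t : ℝ) : ℝ := ξ ^ 2 * (1 - Real.exp (-(κ * t))) / (4 * κ)

/-- explicit Heston forward log-mgf `G_τ(w)`. -/
def hestG (κ θ ξ v ρ t : ℝ) (w : ℂ) (τ : ℝ) : ℂ :=
  hestA κ θ ρ ξ w τ +
    hestB κ ρ ξ w τ * (v : ℂ) * ((Real.exp (-(κ * t)) : ℝ) : ℂ) /
      (1 - 2 * (betaT κ ξ t : ℂ) * hestB κ ρ ξ w τ) -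
    ((2 * κ * θ / ξ ^ 2 : ℝ) : ℂ) *
      Complex.log (1 - 2 * (betaT κ ξ t : ℂ) * hestB κ ρ ξ w τ)

/-- rescaled forward log-mgf, for complex argument. -/
def hestLambdaC (κ θ ξ v ρ t τ : ℝ) (z : ℂ) : ℂ :=
  ((Real.sqrt τ : ℝ) : ℂ) * hestG κ θ ξ v ρ t (z / ((Real.sqrt τ : ℝ) : ℂ)) τ

/-- rescaled forward log-mgf `Λ_τ(u) = √τ · G_τ(u/√τ)`. -/
def hestLambda (κ θ ξ v ρ t τ : ℝ) (u : ℝ) : ℂ :=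
  hestLambdaC κ θ ξ v ρ t τ (u : ℂ)

/-- `D_{t,τ}`: the maximal open interval containing `0` on which `Λ_τ` is real-valued. -/
def hestDom (κ θ ξ v ρ t τ : ℝ) : Set ℝ :=
  connectedComponentIn (interior {u : ℝ | (hestLambda κ θ ξ v ρ t τ u).im = 0}) 0

/-! Write `s = h(τ)` and `w = u / s`. The radicand `Δ(w)` of `d` satisfies
`s² Δ(u / s) → -(1 - ρ²) ξ² u² < 0`, so on the principal branch
`s d(u / s) → D := i ξ |u| √(1 - ρ²) ≠ 0`, while `s (κ - ρξw) → -ρξu`. Hence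
`γ → (-ρξu - D) / (-ρξu + D) ≠ 1`, and `d τ = (s d) · s · (τ / s²) → 0` because
`τ / s² = (√τ / s)² → 0`. So `e^{-dτ} → 1`, the logarithm in `A` tends to `0` and
`B = O(τ / s²) → 0`; each of the three terms of `s G_τ(u / s)` then tends to `0`. -/

open Complex

lemma ofReal_cpow_half_of_nonneg {x : ℝ} (hx : 0 ≤ x) : (x : ℂ) ^ (1 / 2 : ℂ) = (√x : ℝ) := by
  rw [Real.sqrt_eq_rpow, ofReal_cpow hx]
  norm_num

lemma ofReal_cpow_half_of_neg {x : ℝ} (hx : x < 0) :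
    (x : ℂ) ^ (1 / 2 : ℂ) = (√(-x) : ℝ) * I := by
  rw [ofReal_cpow_of_nonpos hx.le, ← ofReal_neg, ofReal_cpow_half_of_nonneg (by linarith),
    show (Real.pi : ℂ) * I * (1 / 2) = Real.pi / 2 * I by ring, exp_pi_div_two_mul_I]

lemma one_sub_exp_eq_neg_mul_dslope (z : ℂ) : 1 - exp z = -z * dslope exp 0 z := by
  have := sub_smul_dslope exp 0 z
  simp only [sub_zero, smul_eq_mul, exp_zero] at this
  linear_combination this

lemma tendsto_dslope_exp_zero : Tendsto (dslope exp 0) (𝓝 0) (𝓝 1) := by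
  have := (continuousAt_dslope_same.2 (differentiableAt_exp (x := (0 : ℂ)))).tendsto
  simpa [dslope_same] using this

lemma sub_div_add_ne_one {c D : ℂ} (hD : D ≠ 0) (hcD : c + D ≠ 0) : (c - D) / (c + D) ≠ 1 := by
  rw [Ne, div_eq_one_iff_eq hcD]
  intro h
  exact hD (by linear_combination -h / 2)

section Limits

variable {α : Type*} {l : Filter α}

lemma tendsto_one_sub_mul_div_one_sub {γ e : α → ℂ} {g : ℂ} (hγ : Tendsto γ l (𝓝 g))
    (hg : g ≠ 1) (he : Tendsto e l (𝓝 1)) :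
    Tendsto (fun a => (1 - γ a * e a) / (1 - γ a)) l (𝓝 1) := by
  have hg' : 1 - g ≠ 0 := sub_ne_zero.2 hg.symm
  simpa [hg', Pi.div_def] using
    ((tendsto_const_nhds (x := (1 : ℂ))).sub (hγ.mul he)).div (tendsto_const_nhds.sub hγ) hg'

lemma tendsto_log_of_tendsto_one {f : α → ℂ} (hf : Tendsto f l (𝓝 1)) :
    Tendsto (fun a => log (f a)) l (𝓝 0) := by
  simpa [Function.comp_def] using (continuousAt_clog one_mem_slitPlane).tendsto.comp hf

end Limits

section Heston

variable {κ ρ ξ : ℝ}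

lemma hestD_zero (hκ : 0 < κ) : hestD κ ρ ξ 0 = κ := by
  rw [hestD, show ((κ : ℂ) - ρ * ξ * 0) ^ 2 + 0 * (1 - 0) * (ξ : ℂ) ^ 2 = ((κ ^ 2 : ℝ) : ℂ) by
    push_cast; ring, ofReal_cpow_half_of_nonneg (sq_nonneg κ), Real.sqrt_sq hκ.le]

lemma hestGamma_zero (hκ : 0 < κ) : hestGamma κ ρ ξ 0 = 0 := by
  simp [hestGamma, hestD_zero hκ]

lemma hestB_zero (hκ : 0 < κ) (τ : ℝ) : hestB κ ρ ξ 0 τ = 0 := by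
  simp [hestB, hestD_zero hκ]

lemma hestG_zero {θ v t : ℝ} (hκ : 0 < κ) (τ : ℝ) : hestG κ θ ξ v ρ t 0 τ = 0 := by
  simp [hestG, hestA, hestB_zero hκ, hestGamma_zero hκ, hestD_zero hκ]

/-- `s² Δ(u / s)`, where `Δ(w) = (κ - ρξw)² + w(1 - w)ξ²` is the radicand of `hestD`. -/
def scaledDisc (κ ρ ξ u s : ℝ) : ℝ := (s * κ - ρ * ξ * u) ^ 2 + u * (s - u) * ξ ^ 2

lemma scaledDisc_zero_neg {u : ℝ} (hξ : 0 < ξ) (hρ : ρ ∈ Set.Ioo (-1 : ℝ) 1) (hu : u ≠ 0) :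
    scaledDisc κ ρ ξ u 0 < 0 := by
  have hρ2 : 0 < 1 - ρ ^ 2 := by nlinarith [hρ.1, hρ.2]
  have : scaledDisc κ ρ ξ u 0 = -((1 - ρ ^ 2) * (ξ * u) ^ 2) := by unfold scaledDisc; ring
  rw [this, neg_lt_zero]
  positivity

lemma ofReal_mul_hestD_div {u s : ℝ} (hs : 0 < s) (hp : scaledDisc κ ρ ξ u s < 0) :
    (s : ℂ) * hestD κ ρ ξ (u / s) = (√(-scaledDisc κ ρ ξ u s) : ℝ) * I := by
  have hs' : (s : ℂ) ≠ 0 := by exact_mod_cast hs.ne'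
  have hrad : ((κ : ℂ) - ρ * ξ * (u / s)) ^ 2 + u / s * (1 - u / s) * (ξ : ℂ) ^ 2
      = ((scaledDisc κ ρ ξ u s / s ^ 2 : ℝ) : ℂ) := by
    unfold scaledDisc; push_cast; field_simp
  rw [hestD, hrad, ofReal_cpow_half_of_neg (div_neg_of_neg_of_pos hp (by positivity)), ← neg_div,
    Real.sqrt_div (by linarith), Real.sqrt_sq hs.le]
  push_cast
  field_simp

end Heston

section Asymptotics

variable {α : Type*} {l : Filter α} {s τ : α → ℝ} {κ ρ ξ u : ℝ}

lemma tendsto_ofReal_mul_hestD (hs : Tendsto s l (𝓝 0)) (hspos : ∀ᶠ a in l, 0 < s a)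
    (hp : scaledDisc κ ρ ξ u 0 < 0) :
    Tendsto (fun a => (s a : ℂ) * hestD κ ρ ξ (u / s a)) l
      (𝓝 ((√(-scaledDisc κ ρ ξ u 0) : ℝ) * I)) := by
  have hdisc : Continuous (scaledDisc κ ρ ξ u) := by unfold scaledDisc; fun_prop
  have hpev : ∀ᶠ a in l, scaledDisc κ ρ ξ u (s a) < 0 :=
    ((hdisc.tendsto 0).comp hs).eventually_lt_const hp
  have hlim : Continuous fun x => ((√(-scaledDisc κ ρ ξ u x) : ℝ) : ℂ) * I := by fun_prop
  refine ((hlim.tendsto 0).comp hs).congr' ?_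
  filter_upwards [hspos, hpev] with a hsa hpa
  exact (ofReal_mul_hestD_div hsa hpa).symm

variable (κ ρ ξ u) in
lemma tendsto_ofReal_mul_kappa_sub (hs : Tendsto s l (𝓝 0)) (hs0 : ∀ᶠ a in l, s a ≠ 0) :
    Tendsto (fun a => (s a : ℂ) * (κ - ρ * ξ * (u / s a))) l (𝓝 (-(ρ * ξ * u))) := by
  refine ((hs.ofReal.mul_const (κ : ℂ)).sub_const (ρ * ξ * u : ℂ)).congr' ?_ |>.trans (by simp)
  filter_upwards [hs0] with a hsa
  have : (s a : ℂ) ≠ 0 := by exact_mod_cast hsa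
  field_simp

lemma tendsto_hestGamma {D : ℂ} (hs : Tendsto s l (𝓝 0)) (hs0 : ∀ᶠ a in l, s a ≠ 0)
    (hD : Tendsto (fun a => (s a : ℂ) * hestD κ ρ ξ (u / s a)) l (𝓝 D))
    (hcD : -(ρ * ξ * u : ℂ) + D ≠ 0) :
    Tendsto (fun a => hestGamma κ ρ ξ (u / s a)) l
      (𝓝 ((-(ρ * ξ * u : ℂ) - D) / (-(ρ * ξ * u : ℂ) + D))) := by
  have hc := tendsto_ofReal_mul_kappa_sub κ ρ ξ u hs hs0
  refine ((hc.sub hD).div (hc.add hD) hcD).congr' ?_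
  filter_upwards [hs0] with a hsa
  have : (s a : ℂ) ≠ 0 := by exact_mod_cast hsa
  rw [Pi.div_apply, hestGamma, ← mul_sub, ← mul_add, mul_div_mul_left _ _ this]

lemma tendsto_neg_hestD_mul {D : ℂ} (hs : Tendsto s l (𝓝 0)) (hs0 : ∀ᶠ a in l, s a ≠ 0)
    (hτ : Tendsto (fun a => τ a / s a ^ 2) l (𝓝 0))
    (hD : Tendsto (fun a => (s a : ℂ) * hestD κ ρ ξ (u / s a)) l (𝓝 D)) :
    Tendsto (fun a => -hestD κ ρ ξ (u / s a) * τ a) l (𝓝 0) := by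
  have hsτ : Tendsto (fun a => (s a * (τ a / s a ^ 2) : ℂ)) l (𝓝 0) := by
    simpa using (hs.mul hτ).ofReal
  refine (hD.mul hsτ).neg.congr' ?_ |>.trans (by simp)
  filter_upwards [hs0] with a hsa
  have : (s a : ℂ) ≠ 0 := by exact_mod_cast hsa
  field_simp

lemma tendsto_exp_neg_hestD_mul {D : ℂ} (hs : Tendsto s l (𝓝 0)) (hs0 : ∀ᶠ a in l, s a ≠ 0)
    (hτ : Tendsto (fun a => τ a / s a ^ 2) l (𝓝 0))
    (hD : Tendsto (fun a => (s a : ℂ) * hestD κ ρ ξ (u / s a)) l (𝓝 D)) :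
    Tendsto (fun a => exp (-hestD κ ρ ξ (u / s a) * τ a)) l (𝓝 1) := by
  simpa [Function.comp_def] using
    (continuous_exp.tendsto 0).comp (tendsto_neg_hestD_mul hs hs0 hτ hD)

lemma tendsto_one_sub_hestGamma_mul_exp_div {D : ℂ} (hs : Tendsto s l (𝓝 0))
    (hs0 : ∀ᶠ a in l, s a ≠ 0)
    (hτ : Tendsto (fun a => τ a / s a ^ 2) l (𝓝 0))
    (hD : Tendsto (fun a => (s a : ℂ) * hestD κ ρ ξ (u / s a)) l (𝓝 D)) (hD0 : D ≠ 0)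
    (hcD : -(ρ * ξ * u : ℂ) + D ≠ 0) :
    Tendsto (fun a => (1 - hestGamma κ ρ ξ (u / s a) * exp (-hestD κ ρ ξ (u / s a) * τ a)) /
      (1 - hestGamma κ ρ ξ (u / s a))) l (𝓝 1) :=
  tendsto_one_sub_mul_div_one_sub (tendsto_hestGamma hs hs0 hD hcD) (sub_div_add_ne_one hD0 hcD)
    (tendsto_exp_neg_hestD_mul hs hs0 hτ hD)

lemma tendsto_hestB {D : ℂ} (hs : Tendsto s l (𝓝 0)) (hs0 : ∀ᶠ a in l, s a ≠ 0)
    (hτ : Tendsto (fun a => τ a / s a ^ 2) l (𝓝 0))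
    (hD : Tendsto (fun a => (s a : ℂ) * hestD κ ρ ξ (u / s a)) l (𝓝 D)) (hD0 : D ≠ 0)
    (hcD : -(ρ * ξ * u : ℂ) + D ≠ 0) :
    Tendsto (fun a => hestB κ ρ ξ (u / s a) (τ a)) l (𝓝 0) := by
  have hγe : Tendsto (fun a => 1 - hestGamma κ ρ ξ (u / s a) * exp (-hestD κ ρ ξ (u / s a) * τ a))
      l (𝓝 (1 - (-(ρ * ξ * u : ℂ) - D) / (-(ρ * ξ * u : ℂ) + D))) := by
    simpa using tendsto_const_nhds.sub
      ((tendsto_hestGamma hs hs0 hD hcD).mul (tendsto_exp_neg_hestD_mul hs hs0 hτ hD))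
  have hc := tendsto_ofReal_mul_kappa_sub κ ρ ξ u hs hs0
  -- with `N = κ - ρξw - d` and `1 - e^{-dτ} = dτ · (dslope exp 0)(-dτ)`, eventually
  -- `B = (s N / ξ²) · (s d) (τ / s²) (dslope exp 0)(-dτ) / (1 - γ e^{-dτ})`
  have hslope := tendsto_dslope_exp_zero.comp (tendsto_neg_hestD_mul hs hs0 hτ hD)
  have hlim := ((hc.sub hD).div_const ((ξ : ℂ) ^ 2)).mul
    (((hD.mul hτ.ofReal).mul hslope).div hγe (sub_ne_zero.2 (sub_div_add_ne_one hD0 hcD).symm))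
  rw [ofReal_zero, mul_zero, zero_mul, zero_div, mul_zero] at hlim
  refine hlim.congr' ?_
  filter_upwards [hs0] with a hsa
  have : (s a : ℂ) ≠ 0 := by exact_mod_cast hsa
  simp only [Pi.div_apply, Function.comp_apply]
  rw [hestB, one_sub_exp_eq_neg_mul_dslope]
  push_cast
  field_simp

lemma tendsto_ofReal_mul_hestA {θ : ℝ} {D : ℂ} (hs : Tendsto s l (𝓝 0))
    (hs0 : ∀ᶠ a in l, s a ≠ 0) (hτ : Tendsto (fun a => τ a / s a ^ 2) l (𝓝 0))
    (hD : Tendsto (fun a => (s a : ℂ) * hestD κ ρ ξ (u / s a)) l (𝓝 D)) (hD0 : D ≠ 0)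
    (hcD : -(ρ * ξ * u : ℂ) + D ≠ 0) :
    Tendsto (fun a => (s a : ℂ) * hestA κ θ ρ ξ (u / s a) (τ a)) l (𝓝 0) := by
  have hτ0 : Tendsto τ l (𝓝 0) := by
    have := (hs.pow 2).mul hτ
    rw [zero_pow two_ne_zero, zero_mul] at this
    refine this.congr' ?_
    filter_upwards [hs0] with a hsa using mul_div_cancel₀ _ (pow_ne_zero 2 hsa)
  have hc := tendsto_ofReal_mul_kappa_sub κ ρ ξ u hs hs0
  have hlog := tendsto_log_of_tendsto_one
    (tendsto_one_sub_hestGamma_mul_exp_div hs hs0 hτ hD hD0 hcD)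
  have hlim := (((hc.sub hD).mul hτ0.ofReal).sub ((hs.ofReal.const_mul 2).mul hlog)).const_mul
    ((κ * θ / ξ ^ 2 : ℝ) : ℂ)
  simp only [ofReal_zero, mul_zero, sub_zero] at hlim
  exact hlim.congr fun a => by rw [hestA]; ring

theorem eventually_ne_zero_and_tendsto_ofReal_mul_hestG {θ v t : ℝ} {D : ℂ}
    (hs : Tendsto s l (𝓝 0)) (hs0 : ∀ᶠ a in l, s a ≠ 0)
    (hτ : Tendsto (fun a => τ a / s a ^ 2) l (𝓝 0))
    (hD : Tendsto (fun a => (s a : ℂ) * hestD κ ρ ξ (u / s a)) l (𝓝 D)) (hD0 : D ≠ 0)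
    (hcD : -(ρ * ξ * u : ℂ) + D ≠ 0) :
    (∀ᶠ a in l,
      (1 - hestGamma κ ρ ξ (u / s a) * exp (-hestD κ ρ ξ (u / s a) * τ a)) /
          (1 - hestGamma κ ρ ξ (u / s a)) ≠ 0 ∧
        1 - 2 * (betaT κ ξ t : ℂ) * hestB κ ρ ξ (u / s a) (τ a) ≠ 0) ∧
      Tendsto (fun a => (s a : ℂ) * hestG κ θ ξ v ρ t (u / s a) (τ a)) l (𝓝 0) := by
  have hB := tendsto_hestB hs hs0 hτ hD hD0 hcD
  have hβB : Tendsto (fun a => 1 - 2 * (betaT κ ξ t : ℂ) * hestB κ ρ ξ (u / s a) (τ a)) l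
      (𝓝 1) := by
    simpa using tendsto_const_nhds.sub (hB.const_mul (2 * (betaT κ ξ t : ℂ)))
  have hratio := tendsto_one_sub_hestGamma_mul_exp_div hs hs0 hτ hD hD0 hcD
  refine ⟨(hratio.eventually_ne one_ne_zero).and (hβB.eventually_ne one_ne_zero), ?_⟩
  have hlim := ((tendsto_ofReal_mul_hestA (θ := θ) hs hs0 hτ hD hD0 hcD).add
    ((((hs.ofReal.mul hB).mul_const (v : ℂ)).mul_const ((Real.exp (-(κ * t)) : ℝ) : ℂ)).div hβB
      one_ne_zero)).sub
    ((hs.ofReal.mul_const ((2 * κ * θ / ξ ^ 2 : ℝ) : ℂ)).mul (tendsto_log_of_tendsto_one hβB))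
  simp only [ofReal_zero, zero_mul, zero_div, add_zero, sub_zero] at hlim
  exact hlim.congr fun a => by simp only [Pi.div_apply, hestG]; ring

end Asymptotics

theorem stmt1_general (κ θ ξ v ρ t : ℝ) (hκ : 0 < κ) (hξ : 0 < ξ)
    (hρ : ρ ∈ Set.Ioo (-1 : ℝ) 1)
    (h : ℝ → ℝ) (hpos : ∀ τ ∈ Set.Ioi (0 : ℝ), 0 < h τ)
    (hlim : Tendsto h (𝓝[>] (0 : ℝ)) (𝓝 0))
    (hrat : Tendsto (fun τ : ℝ => Real.sqrt τ / h τ) (𝓝[>] (0 : ℝ)) (𝓝 0))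
    (u : ℝ) :
    (∀ᶠ τ in 𝓝[>] (0 : ℝ),
      ((1 - hestGamma κ ρ ξ ((u : ℂ) / ((h τ : ℝ) : ℂ)) *
            Complex.exp (-(hestD κ ρ ξ ((u : ℂ) / ((h τ : ℝ) : ℂ))) * (τ : ℂ))) /
          (1 - hestGamma κ ρ ξ ((u : ℂ) / ((h τ : ℝ) : ℂ)))) ≠ 0 ∧
      (1 - 2 * (betaT κ ξ t : ℂ) * hestB κ ρ ξ ((u : ℂ) / ((h τ : ℝ) : ℂ)) τ) ≠ 0) ∧
    Tendsto (fun τ : ℝ => ((h τ : ℝ) : ℂ) *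
        hestG κ θ ξ v ρ t ((u : ℂ) / ((h τ : ℝ) : ℂ)) τ)
      (𝓝[>] (0 : ℝ)) (𝓝 0) := by
  rcases eq_or_ne u 0 with rfl | hu
  · simp [hestGamma_zero hκ, hestB_zero hκ, hestG_zero hκ]
  have hspos : ∀ᶠ τ in 𝓝[>] (0 : ℝ), 0 < h τ := eventually_nhdsWithin_of_forall hpos
  have hτ : Tendsto (fun τ => τ / h τ ^ 2) (𝓝[>] 0) (𝓝 0) := by
    refine (zero_pow two_ne_zero (M₀ := ℝ) ▸ hrat.pow 2).congr' ?_
    filter_upwards [self_mem_nhdsWithin] with τ hτ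
    rw [div_pow, Real.sq_sqrt (le_of_lt hτ)]
  have hp := scaledDisc_zero_neg (κ := κ) hξ hρ hu
  have hsqrt : 0 < √(-scaledDisc κ ρ ξ u 0) := Real.sqrt_pos.2 (neg_pos.2 hp)
  have hD0 : ((√(-scaledDisc κ ρ ξ u 0) : ℝ) : ℂ) * I ≠ 0 :=
    mul_ne_zero (ofReal_ne_zero.2 hsqrt.ne') I_ne_zero
  have hcD : -(ρ * ξ * u : ℂ) + (√(-scaledDisc κ ρ ξ u 0) : ℝ) * I ≠ 0 := fun h0 => by
    simpa [hsqrt.ne'] using congrArg im h0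
  exact eventually_ne_zero_and_tendsto_ofReal_mul_hestG hlim (hspos.mono fun _ hx => hx.ne') hτ
    (tendsto_ofReal_mul_hestD hlim hspos hp) hD0 hcD

theorem stmt1 (κ θ ξ v ρ t : ℝ) (hκ : 0 < κ) (hθ : 0 < θ) (hξ : 0 < ξ)
    (hv : 0 < v) (hρ : ρ ∈ Set.Ioo (-1 : ℝ) 1) (ht : 0 < t)
    (h : ℝ → ℝ) (hpos : ∀ τ ∈ Set.Ioi (0 : ℝ), 0 < h τ)
    (hcont : ContinuousOn h (Set.Ioi 0))
    (hlim : Tendsto h (𝓝[>] (0 : ℝ)) (𝓝 0))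
    (hrat : Tendsto (fun τ : ℝ => Real.sqrt τ / h τ) (𝓝[>] (0 : ℝ)) (𝓝 0))
    (u : ℝ) :
    (∀ᶠ τ in 𝓝[>] (0 : ℝ),
      ((1 - hestGamma κ ρ ξ ((u : ℂ) / ((h τ : ℝ) : ℂ)) *
            Complex.exp (-(hestD κ ρ ξ ((u : ℂ) / ((h τ : ℝ) : ℂ))) * (τ : ℂ))) /
          (1 - hestGamma κ ρ ξ ((u : ℂ) / ((h τ : ℝ) : ℂ)))) ≠ 0 ∧
      (1 - 2 * (betaT κ ξ t : ℂ) * hestB κ ρ ξ ((u : ℂ) / ((h τ : ℝ) : ℂ)) τ) ≠ 0) ∧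
    Tendsto (fun τ : ℝ => ((h τ : ℝ) : ℂ) *
        hestG κ θ ξ v ρ t ((u : ℂ) / ((h τ : ℝ) : ℂ)) τ)
      (𝓝[>] (0 : ℝ)) (𝓝 0) :=
  stmt1_general κ θ ξ v ρ t hκ hξ hρ h hpos hlim hrat u
end
end

section
/- Fix a constant a > 0 and a real u ≠ 0. Then lim_{τ→0+} B(u/(a√τ), τ) = u²/(2a²) (limit in ℂ). -/
open Filter Topology Asymptotics MeasureTheory

set_option linter.unusedVariables false

noncomputable section


/-! Write `N = κ - ρξw - d` and `P = κ - ρξw + d`. Since `N P = w(w-1)ξ²`, the factor `γ = N/P`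
can be cleared: `B(w, τ) = w(w-1)(1 - e^{-dτ}) / (2d + N(1 - e^{-dτ}))`. Substituting `s = √τ`
gives `w = c/s` with `c = u/a` and `τ = s²`; divide numerator and denominator by `dτ`.
Then `w(w-1)τ = c² - cs → c²`; `d²s² → -(1-ρ²)ξ²c² ≠ 0`, so `dτ → 0` and
`(1 - e^{-dτ})/(dτ) → 1`; and `Nτ → 0`. Hence `B → c²/2`. -/

lemma hestD_sq (κ ρ ξ : ℝ) (w : ℂ) :
    hestD κ ρ ξ w ^ 2 = ((κ : ℂ) - ρ * ξ * w) ^ 2 + w * (1 - w) * ξ ^ 2 := by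
  simp [hestD]

lemma hestB_eq_mul_div (κ ρ ξ : ℝ) {w : ℂ} (τ : ℝ) (hξ : ξ ≠ 0) (hw : w * (w - 1) ≠ 0) :
    hestB κ ρ ξ w τ = w * (w - 1) * (1 - Complex.exp (-hestD κ ρ ξ w * τ)) /
      (2 * hestD κ ρ ξ w +
        ((κ : ℂ) - ρ * ξ * w - hestD κ ρ ξ w) * (1 - Complex.exp (-hestD κ ρ ξ w * τ))) := by
  have hNP : ((κ : ℂ) - ρ * ξ * w - hestD κ ρ ξ w) * ((κ : ℂ) - ρ * ξ * w + hestD κ ρ ξ w) =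
      w * (w - 1) * ξ ^ 2 := by
    linear_combination -hestD_sq κ ρ ξ w
  have hξ' : (ξ : ℂ) ^ 2 ≠ 0 := by exact_mod_cast pow_ne_zero 2 hξ
  have hP : (κ : ℂ) - ρ * ξ * w + hestD κ ρ ξ w ≠ 0 := fun h ↦
    mul_ne_zero hw hξ' (by rw [← hNP, h, mul_zero])
  rw [hestB, hestGamma]
  generalize hestD κ ρ ξ w = d at *
  generalize Complex.exp (-d * τ) = e
  generalize (κ : ℂ) - ρ * ξ * w = K at *
  have hden : 1 - (K - d) / (K + d) * e = (2 * d + (K - d) * (1 - e)) / (K + d) := by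
    field_simp; ring
  rw [hden, div_div_eq_mul_div]
  calc (K - d) / ξ ^ 2 * ((1 - e) * (K + d) / (2 * d + (K - d) * (1 - e)))
      _ = ξ ^ 2 * (w * (w - 1) * (1 - e)) / (ξ ^ 2 * (2 * d + (K - d) * (1 - e))) := by
        rw [show (ξ : ℂ) ^ 2 * (w * (w - 1) * (1 - e)) = (K - d) * (K + d) * (1 - e) by
          rw [hNP]; ring]
        rw [div_mul_div_comm]; ring
      _ = _ := mul_div_mul_left _ _ hξ'

lemma div_add_mul_eq_mul_div_add {K : Type*} [Field K] (x y d N τ : K) (hd : d ≠ 0) (hτ : τ ≠ 0) :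
    x * y / (2 * d + N * y) = x * τ * (y / (d * τ)) / (2 + N * τ * (y / (d * τ))) := by
  rw [show x * τ * (y / (d * τ)) = x * y / d by field_simp,
    show 2 + N * τ * (y / (d * τ)) = (2 * d + N * y) / d by field_simp,
    div_div_div_cancel_right₀ hd]

lemma tendsto_one_sub_exp_neg_div :
    Tendsto (fun z : ℂ => (1 - Complex.exp (-z)) / z) (𝓝[≠] 0) (𝓝 1) := by
  have h : HasDerivAt (fun z : ℂ => 1 - Complex.exp (-z)) 1 0 := by
    simpa using ((Complex.hasDerivAt_exp _).comp 0 (hasDerivAt_neg 0)).const_sub 1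
  refine h.tendsto_slope.congr fun z => ?_
  simp [slope_def_field]

lemma tendsto_zero_of_sq_tendsto_zero {α 𝕜 : Type*} [NormedDivisionRing 𝕜] {l : Filter α}
    {f : α → 𝕜} (h : Tendsto (fun x => f x ^ 2) l (𝓝 0)) : Tendsto f l (𝓝 0) := by
  rw [tendsto_zero_iff_norm_tendsto_zero] at h ⊢
  simpa [Function.comp_def, norm_pow, Real.sqrt_sq (norm_nonneg _)] using
    (Real.continuous_sqrt.tendsto 0).comp h

lemma tendsto_ofReal_nhdsNE_zero : Tendsto (fun s : ℝ => (s : ℂ)) (𝓝[≠] 0) (𝓝 0) :=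
  (Complex.continuous_ofReal.tendsto' 0 0 Complex.ofReal_zero).mono_left nhdsWithin_le_nhds

lemma eventually_ofReal_ne_zero : ∀ᶠ s : ℝ in 𝓝[≠] 0, (s : ℂ) ≠ 0 := by
  filter_upwards [self_mem_nhdsWithin] with s hs using Complex.ofReal_ne_zero.mpr hs

section Asymptotics

variable (κ ρ ξ : ℝ) (c : ℂ)

lemma tendsto_hestD_sq_mul_sq :
    Tendsto (fun s : ℝ => hestD κ ρ ξ (c / s) ^ 2 * s ^ 2) (𝓝[≠] 0)
      (𝓝 (-((1 - ρ ^ 2) * ξ ^ 2 * c ^ 2))) := by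
  have hs := tendsto_ofReal_nhdsNE_zero
  have h : Tendsto (fun s : ℝ => ((κ : ℂ) * s - ρ * ξ * c) ^ 2 + c * ξ ^ 2 * s - c ^ 2 * ξ ^ 2)
      (𝓝[≠] 0) (𝓝 (-((1 - ρ ^ 2) * ξ ^ 2 * c ^ 2))) := by
    convert ((((hs.const_mul (κ : ℂ)).sub_const (ρ * ξ * c)).pow 2).add
      (hs.const_mul (c * ξ ^ 2))).sub_const (c ^ 2 * ξ ^ 2) using 2
    ring
  refine h.congr' ?_
  filter_upwards [eventually_ofReal_ne_zero] with s hs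
  rw [hestD_sq]
  field_simp
  ring

lemma tendsto_hestD_mul_sq :
    Tendsto (fun s : ℝ => hestD κ ρ ξ (c / s) * s ^ 2) (𝓝[≠] 0) (𝓝 0) := by
  refine tendsto_zero_of_sq_tendsto_zero ?_
  convert (tendsto_hestD_sq_mul_sq κ ρ ξ c).mul (tendsto_ofReal_nhdsNE_zero.pow 2) using 2 with s
  · ring
  · simp

lemma eventually_hestD_ne_zero (hξ : ξ ≠ 0) (hρ : ρ ^ 2 ≠ 1) (hc : c ≠ 0) :
    ∀ᶠ s : ℝ in 𝓝[≠] 0, hestD κ ρ ξ (c / s) ≠ 0 := by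
  have hL : -((1 - ρ ^ 2) * ξ ^ 2 * c ^ 2) ≠ (0 : ℂ) := by
    have : (1 : ℂ) - ρ ^ 2 ≠ 0 := by exact_mod_cast sub_ne_zero.mpr (Ne.symm hρ)
    simp_all
  filter_upwards [(tendsto_hestD_sq_mul_sq κ ρ ξ c).eventually_ne hL] with s hs
  exact fun h ↦ hs (by simp [h])

lemma tendsto_hestB_div_sq (hξ : ξ ≠ 0) (hρ : ρ ^ 2 ≠ 1) (hc : c ≠ 0) :
    Tendsto (fun s : ℝ => hestB κ ρ ξ (c / s) (s ^ 2)) (𝓝[≠] 0) (𝓝 (c ^ 2 / 2)) := by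
  set d : ℝ → ℂ := fun s => hestD κ ρ ξ (c / s)
  have hs := tendsto_ofReal_nhdsNE_zero
  have hz := tendsto_hestD_mul_sq κ ρ ξ c
  have hd0 := eventually_hestD_ne_zero κ ρ ξ c hξ hρ hc
  have hx : Tendsto (fun s : ℝ => c / s * (c / s - 1) * s ^ 2) (𝓝[≠] 0) (𝓝 (c ^ 2)) := by
    have h : Tendsto (fun s : ℝ => c ^ 2 - c * s) (𝓝[≠] 0) (𝓝 (c ^ 2)) := by
      simpa using (hs.const_mul c).const_sub (c ^ 2)
    refine h.congr' ?_
    filter_upwards [eventually_ofReal_ne_zero] with s hs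
    field_simp
  have hQ : Tendsto (fun s => (1 - Complex.exp (-(d s * s ^ 2))) / (d s * s ^ 2)) (𝓝[≠] 0)
      (𝓝 1) := by
    refine tendsto_one_sub_exp_neg_div.comp (tendsto_nhdsWithin_iff.mpr ⟨hz, ?_⟩)
    filter_upwards [hd0, eventually_ofReal_ne_zero] with s hd hs
      using mul_ne_zero hd (pow_ne_zero 2 hs)
  have hN : Tendsto (fun s => ((κ : ℂ) - ρ * ξ * (c / s) - d s) * s ^ 2) (𝓝[≠] 0) (𝓝 0) := by
    have h : Tendsto (fun s : ℝ => (κ : ℂ) * s ^ 2 - ρ * ξ * c * s - d s * s ^ 2) (𝓝[≠] 0)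
        (𝓝 0) := by
      simpa using (((hs.pow 2).const_mul (κ : ℂ)).sub (hs.const_mul (ρ * ξ * c))).sub hz
    refine h.congr' ?_
    filter_upwards [eventually_ofReal_ne_zero] with s hs
    field_simp
  have hw : ∀ᶠ s : ℝ in 𝓝[≠] 0, c / s * (c / s - 1) ≠ 0 := by
    filter_upwards [hx.eventually_ne (pow_ne_zero 2 hc)] with s hs using left_ne_zero_of_mul hs
  have hlim := (hx.mul hQ).div ((hN.mul hQ).const_add 2) (by norm_num)
  simp only [mul_one, add_zero] at hlim
  refine hlim.congr' ?_
  filter_upwards [eventually_ofReal_ne_zero, hd0, hw] with s hs hd hw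
  rw [hestB_eq_mul_div κ ρ ξ _ hξ hw]
  push_cast
  rw [Pi.div_apply, neg_mul, div_add_mul_eq_mul_div_add _ _ _ _ _ hd (pow_ne_zero 2 hs)]

end Asymptotics

theorem stmt4_general (κ ξ ρ : ℝ) (hξ : 0 < ξ) (hρ : ρ ∈ Set.Ioo (-1 : ℝ) 1)
    (a : ℝ) (ha : 0 < a) (u : ℝ) (hu : u ≠ 0) :
    Tendsto (fun τ : ℝ => hestB κ ρ ξ ((u : ℂ) / ((a * Real.sqrt τ : ℝ) : ℂ)) τ)
      (𝓝[>] (0 : ℝ)) (𝓝 ((u ^ 2 / (2 * a ^ 2) : ℝ) : ℂ)) := by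
  have hρ2 : ρ ^ 2 ≠ 1 := by nlinarith [hρ.1, hρ.2]
  have hc : (u : ℂ) / a ≠ 0 := div_ne_zero (by exact_mod_cast hu) (by exact_mod_cast ha.ne')
  have hsqrt : Tendsto Real.sqrt (𝓝[>] 0) (𝓝[≠] 0) := by
    refine tendsto_nhdsWithin_iff.mpr ⟨?_, ?_⟩
    · simpa using (Real.continuous_sqrt.tendsto 0).mono_left nhdsWithin_le_nhds
    · filter_upwards [self_mem_nhdsWithin] with τ hτ using (Real.sqrt_pos.mpr hτ).ne'
  have hlim : (((u ^ 2 / (2 * a ^ 2) : ℝ)) : ℂ) = ((u : ℂ) / a) ^ 2 / 2 := by push_cast; ring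
  rw [hlim]
  refine ((tendsto_hestB_div_sq κ ρ ξ _ hξ.ne' hρ2 hc).comp hsqrt).congr' ?_
  filter_upwards [self_mem_nhdsWithin] with τ hτ
  rw [Function.comp_apply, Real.sq_sqrt (le_of_lt hτ)]
  push_cast
  rw [div_div]

theorem stmt4 (κ θ ξ v ρ t : ℝ) (hκ : 0 < κ) (hθ : 0 < θ) (hξ : 0 < ξ)
    (hv : 0 < v) (hρ : ρ ∈ Set.Ioo (-1 : ℝ) 1) (ht : 0 < t)
    (a : ℝ) (ha : 0 < a) (u : ℝ) (hu : u ≠ 0) :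
    Tendsto (fun τ : ℝ => hestB κ ρ ξ ((u : ℂ) / ((a * Real.sqrt τ : ℝ) : ℂ)) τ)
      (𝓝[>] (0 : ℝ)) (𝓝 ((u ^ 2 / (2 * a ^ 2) : ℝ) : ℂ)) :=
  stmt4_general κ ξ ρ hξ hρ a ha u hu

end
end
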